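/- Let R be a tolerance on U and x ∈ U. R(x) is an R-block if and only if R(x) = ⋂ {R(a) : a ∈ R(x)}. -/

import Mathlib

variable {α : Type*}

/-- The `R`-neighbourhood of `x`. -/
def nbhd (R : α → α → Prop) (x : α) : Set α := {y | R x y}

/-- A nonempty set all of whose pairs are related: an `R`-preblock. -/
def IsPreblock (R : α → α → Prop) (X : Set α) : Prop :=
  X.Nonempty ∧ ∀ a ∈ X, ∀ b ∈ X, R a b

/-- An `R`-block: a maximal `R`-preblock. -/
def IsBlock (R : α → α → Prop) (B : Set α) : Prop :=
  IsPreblock R B ∧ ∀ X, IsPreblock R X → B ⊆ X → B = X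

/-- A covering of the universe by nonempty sets. -/
def IsCovering (H : Set (Set α)) : Prop :=
  (∀ X ∈ H, X.Nonempty) ∧ ⋃₀ H = Set.univ

/-- An irredundant covering: no member can be removed. -/
def IsIrredundant (H : Set (Set α)) : Prop :=
  IsCovering H ∧ ∀ X ∈ H, ¬ IsCovering (H \ {X})

/-- The family `H` induces the relation `R`. -/
def Induces (H : Set (Set α)) (R : α → α → Prop) : Prop :=
  ∀ a b, R a b ↔ ∃ X ∈ H, a ∈ X ∧ b ∈ X

/-- Minimal element of a quasiorder. -/
def QMinimal (le : α → α → Prop) (m : α) : Prop := ∀ y, le y m → le m y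

/-- Upset of an element. -/
def upset (le : α → α → Prop) (m : α) : Set α := {y | le m y}

/-- The tolerance `≈ = ≳ ∘ ≲` determined by a quasiorder. -/
def approx (le : α → α → Prop) (x y : α) : Prop := ∃ a, le a x ∧ le a y

/-- Bounded by minimal elements. -/
def BoundedByMinimals (le : α → α → Prop) : Prop :=
  ∀ x, ∃ m, QMinimal le m ∧ le m x

/-- The quasiorder `≲_R` determined by a tolerance. -/
def tolLe (R : α → α → Prop) (x y : α) : Prop := nbhd R x ⊆ nbhd R y

/-- Helly number 2 for a quasiordered set. -/
def Helly2 (le : α → α → Prop) : Prop :=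
  ∀ A : Set α, A.Nonempty → (∀ x ∈ A, ∀ y ∈ A, ∃ a, le a x ∧ le a y) →
    ∃ a, ∀ x ∈ A, le a x

/-- A canonical base: a family of `R`-blocks inducing `R`, no member removable. -/
def CanonicalBase (R : α → α → Prop) (K : Set (Set α)) : Prop :=
  (∀ X ∈ K, IsBlock R X) ∧ Induces K R ∧ ∀ X ∈ K, ¬ Induces (K \ {X}) R

/-! Since `x ∈ R(x)`, the intersection always lies inside `R(x)`, and `R(x)` lies inside it exactly
when `R(x)` is a preblock. Any preblock containing `x` is contained in `R(x)`, so once `R(x)` is a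
preblock it is automatically maximal. -/

section

variable {R : α → α → Prop} {x : α}

theorem forall_mem_rel_iff_subset_biInter_nbhd (X : Set α) :
    (∀ a ∈ X, ∀ b ∈ X, R a b) ↔ X ⊆ ⋂ a ∈ X, nbhd R a := by
  simp only [Set.subset_iInter_iff]
  rfl

theorem IsPreblock.subset_nbhd {X : Set α} (hX : IsPreblock R X) (hx : x ∈ X) :
    X ⊆ nbhd R x :=
  fun y hy => hX.2 x hx y hy

theorem isBlock_nbhd_iff_isPreblock (hx : R x x) :
    IsBlock R (nbhd R x) ↔ IsPreblock R (nbhd R x) :=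
  ⟨And.left, fun h => ⟨h, fun _ hX hsub => hsub.antisymm (hX.subset_nbhd (hsub hx))⟩⟩

theorem isPreblock_nbhd_iff_eq_biInter (hx : R x x) :
    IsPreblock R (nbhd R x) ↔ nbhd R x = ⋂ a ∈ nbhd R x, nbhd R a := by
  rw [IsPreblock, forall_mem_rel_iff_subset_biInter_nbhd]
  exact ⟨fun h => h.2.antisymm (Set.biInter_subset_of_mem hx),
    fun h => ⟨⟨x, hx⟩, h.subset⟩⟩

end

theorem stmt2_general (R : α → α → Prop) (hrefl : Reflexive R) (x : α) :
    IsBlock R (nbhd R x) ↔ nbhd R x = ⋂ a ∈ nbhd R x, nbhd R a :=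
  (isBlock_nbhd_iff_isPreblock (hrefl x)).trans (isPreblock_nbhd_iff_eq_biInter (hrefl x))

theorem stmt2 (R : α → α → Prop) (hrefl : Reflexive R) (hsymm : Symmetric R) (x : α) :
    IsBlock R (nbhd R x) ↔ nbhd R x = ⋂ a ∈ nbhd R x, nbhd R a :=
  stmt2_general R hrefl x
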